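/- arXiv:2412.08433 — 5 statements merged into one kernel-verified Lean document; each statement's English description precedes it below -/
import Mathlib

section
/- Let α be an automaton automorphism of the rooted d-regular tree, i.e., the set A = {α|_v : v ∈ C*} of sections of α is finite, with |A| = K. Let a, b ∈ C* with b nonempty, and let η = a b^ω. If α fixes the vertex a b^{K+1}, then α fixes the ray η. -/
/-!
All sections `α|_{a b^m}` lie in the set of `K` sections of `α`, and each one determines the
next, since `α|_{u b}` is read off from `α|_u`. By pigeonhole the sequence `m ↦ α|_{a b^m}`
therefore takes no value outside its first `K` terms. For `m < K` the section `α|_{a b^m}` fixes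
`b`, because `α` fixes both `a b^m` and `a b^{m+1}`; hence every section along the ray fixes `b`,
and `α` fixes `a b^m` for all `m`, so also every prefix of `η`.
-/

theorem exists_lt_card_eq_of_eq_imp_succ_eq {α : Type*} (s : ℕ → α)
    (hs : ∀ i j, s i = s j → s (i + 1) = s (j + 1)) (T : Finset α) (hT : ∀ n, s n ∈ T) :
    ∀ n, ∃ m < T.card, s n = s m := by
  have shift : ∀ i j, s i = s j → ∀ t, s (i + t) = s (j + t) := fun i j h t => by
    induction t with
    | zero => exact h
    | succ t ih => exact hs _ _ ih
  obtain ⟨i, j, hij, hjT, hsij⟩ : ∃ i j, i < j ∧ j ≤ T.card ∧ s i = s j := by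
    obtain ⟨x, hx, y, hy, hxy, hsxy⟩ := Finset.exists_ne_map_eq_of_card_lt_of_maps_to
      (s := Finset.range (T.card + 1)) (by simp) (fun n _ => hT n)
    rw [Finset.mem_range] at hx hy
    rcases hxy.lt_or_gt with h | h
    · exact ⟨x, y, h, by omega, hsxy⟩
    · exact ⟨y, x, h, by omega, hsxy.symm⟩
  intro n
  induction n using Nat.strong_induction_on with
  | _ n ih =>
    by_cases hn : n < j
    · exact ⟨n, by omega, rfl⟩
    · obtain ⟨m, hm, hsm⟩ := ih (i + (n - j)) (by omega)
      refine ⟨m, hm, ?_⟩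
      rw [← hsm, shift i j hsij, Nat.add_sub_cancel' (by omega)]

section TreeAutomorphism

variable {C : Type*} {act : List C → List C} {sec : List C → List C → List C}

theorem act_eq_self_of_append_eq_self (hlen : ∀ w, (act w).length = w.length)
    (hcocycle : ∀ u w, act (u ++ w) = act u ++ sec u w) {u w : List C}
    (h : act (u ++ w) = u ++ w) : act u = u :=
  (List.append_inj ((hcocycle u w).symm.trans h) (hlen u)).1

theorem sec_eq_self_of_act_eq_self (hcocycle : ∀ u w, act (u ++ w) = act u ++ sec u w)
    {u v : List C} (hu : act u = u) (huv : act (u ++ v) = u ++ v) : sec u v = v := by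
  rw [hcocycle, hu] at huv
  exact List.append_cancel_left huv

theorem sec_append_apply (hlen : ∀ w, (act w).length = w.length)
    (hcocycle : ∀ u w, act (u ++ w) = act u ++ sec u w) (u v x : List C) :
    sec (u ++ v) x = (sec u (v ++ x)).drop v.length := by
  have hsec : sec u (v ++ x) = sec u v ++ sec (u ++ v) x := by
    have h := hcocycle (u ++ v) x
    rw [List.append_assoc, hcocycle, hcocycle u v, List.append_assoc] at h
    exact List.append_cancel_left h
  have hlen_sec : (sec u v).length = v.length := by
    have h := congrArg List.length (hcocycle u v)
    simp only [hlen, List.length_append] at h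
    omega
  rw [hsec, List.drop_left' hlen_sec]

theorem sec_append_congr (hlen : ∀ w, (act w).length = w.length)
    (hcocycle : ∀ u w, act (u ++ w) = act u ++ sec u w) {u u' : List C} (h : sec u = sec u')
    (v : List C) : sec (u ++ v) = sec (u' ++ v) := by
  funext x
  rw [sec_append_apply hlen hcocycle, sec_append_apply hlen hcocycle, h]

end TreeAutomorphism

theorem stmt1_general {C : Type*} (act : List C → List C) (sec : List C → (List C → List C))
    (hlen : ∀ w, (act w).length = w.length)
    (hcocycle : ∀ u w, act (u ++ w) = act u ++ sec u w)
    (K : ℕ)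
    (hfin : {f : List C → List C | ∃ v : List C, sec v = f}.Finite)
    (hcard : hfin.toFinset.card = K)
    (a b : List C)
    (hfix : act (a ++ (List.replicate (K + 1) b).flatten) = a ++ (List.replicate (K + 1) b).flatten) :
    ∀ k : ℕ, act ((a ++ (List.replicate k b).flatten).take k)
      = (a ++ (List.replicate k b).flatten).take k := by
  set A : ℕ → List C := fun m => a ++ (List.replicate m b).flatten
  have hA : ∀ m n, A (m + n) = A m ++ (List.replicate n b).flatten := fun m n => by
    simp only [A, List.replicate_add, List.flatten_append, List.append_assoc]
  have hAsucc : ∀ m, A (m + 1) = A m ++ b := fun m => by simp [hA]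
  have hfix_le : ∀ m ≤ K + 1, act (A m) = A m := fun m hm =>
    act_eq_self_of_append_eq_self hlen hcocycle (by rwa [← hA, Nat.add_sub_cancel' hm])
  have hsec := exists_lt_card_eq_of_eq_imp_succ_eq (fun m => sec (A m))
    (fun i j h => by simpa only [hAsucc] using sec_append_congr hlen hcocycle h b)
    hfin.toFinset (fun m => by simp)
  have hsec_b : ∀ m, sec (A m) b = b := fun m => by
    obtain ⟨n, hn, hmn⟩ := hsec m
    rw [hmn, sec_eq_self_of_act_eq_self hcocycle (hfix_le n (by omega))
      (by rw [← hAsucc]; exact hfix_le (n + 1) (by omega))]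
  have hfix_all : ∀ m, act (A m) = A m := fun m => by
    induction m with
    | zero => exact hfix_le 0 (by omega)
    | succ m ih => rw [hAsucc, hcocycle, ih, hsec_b]
  intro k
  exact act_eq_self_of_append_eq_self hlen hcocycle
    (by rw [List.take_append_drop]; exact hfix_all k)

/-- If `act` is an automaton automorphism of the rooted tree over alphabet `C`
(length-preserving, with sections `sec v` satisfying the cocycle rule, and with a finite
set of sections of cardinality `K`), `a b : List C` with `b` nonempty, and `act` fixes the
vertex `a b^(K+1)`, then `act` fixes every finite prefix of the ray `η = a b^ω`
(the length-`k` prefix of `a b^ω` is `(a ++ b^k).take k` since `b` is nonempty). -/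
theorem stmt1 {C : Type*} (act : List C → List C) (sec : List C → (List C → List C))
    (hlen : ∀ w, (act w).length = w.length)
    (hnil : sec [] = act)
    (hcocycle : ∀ u w, act (u ++ w) = act u ++ sec u w)
    (K : ℕ)
    (hfin : {f : List C → List C | ∃ v : List C, sec v = f}.Finite)
    (hcard : hfin.toFinset.card = K)
    (a b : List C) (hb : b ≠ [])
    (hfix : act (a ++ (List.replicate (K + 1) b).flatten) = a ++ (List.replicate (K + 1) b).flatten) :
    ∀ k : ℕ, act ((a ++ (List.replicate k b).flatten).take k)
      = (a ++ (List.replicate k b).flatten).take k :=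
  stmt1_general act sec hlen hcocycle K hfin hcard a b hfix
end

section
/- Let α be a tree automorphism with finite section set A, and let K = |A|. If α fixes the vertex a b^{K+1}, then by pigeonhole there exist 0 ≤ k₂ < k₁ ≤ K with α|_{a b^{k₁}} = α|_{a b^{k₂}}, and consequently (a b^ω)·α = a b^{k₂} (b^{k₁−k₂})^ω. -/
/-- Pigeonhole on sections: if the automaton automorphism `act` (with sections `sec`,
finite section set of cardinality `K`) fixes the vertex `a b^(K+1)` (`b` nonempty), then
there exist `0 ≤ k₂ < k₁ ≤ K` with equal sections `sec (a b^{k₁}) = sec (a b^{k₂})`, and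
consequently `act` fixes the ray `a b^ω = a b^{k₂} (b^{k₁-k₂})^ω`, i.e. it fixes every
finite prefix of `a b^ω`. -/
theorem stmt2 {C : Type*} (act : List C → List C) (sec : List C → (List C → List C))
    (hlen : ∀ w, (act w).length = w.length)
    (hnil : sec [] = act)
    (hcocycle : ∀ u w, act (u ++ w) = act u ++ sec u w)
    (K : ℕ)
    (hfin : {f : List C → List C | ∃ v : List C, sec v = f}.Finite)
    (hcard : hfin.toFinset.card = K)
    (a b : List C) (hb : b ≠ [])
    (hfix : act (a ++ (List.replicate (K + 1) b).flatten) = a ++ (List.replicate (K + 1) b).flatten) :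
    ∃ k₁ k₂ : ℕ, k₂ < k₁ ∧ k₁ ≤ K ∧
      sec (a ++ (List.replicate k₁ b).flatten) = sec (a ++ (List.replicate k₂ b).flatten) ∧
      ∀ n : ℕ, act ((a ++ (List.replicate n b).flatten).take n)
        = (a ++ (List.replicate n b).flatten).take n := by
  classical
  obtain ⟨B, hB⟩ : ∃ B : ℕ → List C, ∀ m, B m = (List.replicate m b).flatten :=
    ⟨_, fun _ => rfl⟩
  simp only [← hB] at hfix ⊢
  have Badd : ∀ m k, B (m + k) = B m ++ B k := by
    intro m k
    rw [hB, hB, hB, List.replicate_add, List.flatten_append]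
  -- if act fixes w ++ v then it fixes w
  have pfix : ∀ w v : List C, act (w ++ v) = w ++ v → act w = w := by
    intro w v h
    have h2 := hcocycle w v
    rw [h] at h2
    exact (List.append_inj_left h2 (hlen w).symm).symm
  -- act fixes all prefixes a ++ B j for j ≤ K+1
  have fixpre : ∀ j, j ≤ K + 1 → act (a ++ B j) = a ++ B j := by
    intro j hj
    apply pfix _ (B (K + 1 - j))
    have : a ++ B j ++ B (K + 1 - j) = a ++ B (K + 1) := by
      rw [List.append_assoc, ← Badd, Nat.add_sub_cancel' hj]
    rw [this]; exact hfix
  -- pigeonhole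
  obtain ⟨k₁, k₂, hk, hk1, hsec⟩ :
      ∃ k₁ k₂ : ℕ, k₂ < k₁ ∧ k₁ ≤ K ∧ sec (a ++ B k₁) = sec (a ++ B k₂) := by
    have fmem : ∀ j : Fin (K + 1), sec (a ++ B j) ∈ hfin.toFinset := by
      intro j
      rw [Set.Finite.mem_toFinset]
      exact ⟨_, rfl⟩
    let f : Fin (K + 1) → hfin.toFinset := fun j => ⟨sec (a ++ B j), fmem j⟩
    have hlt : Fintype.card hfin.toFinset < Fintype.card (Fin (K + 1)) := by
      simp [Fintype.card_coe, hcard]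
    obtain ⟨i, j, hne, heq⟩ := Fintype.exists_ne_map_eq_of_card_lt f hlt
    have heq' : sec (a ++ B i) = sec (a ++ B j) := congrArg Subtype.val heq
    rcases lt_or_gt_of_ne hne with h | h
    · exact ⟨j, i, h, Nat.lt_succ_iff.mp j.isLt, heq'.symm⟩
    · exact ⟨i, j, h, Nat.lt_succ_iff.mp i.isLt, heq'⟩
  -- act fixes a ++ B m for all m
  have fixall : ∀ m, act (a ++ B m) = a ++ B m := by
    intro m
    induction m using Nat.strong_induction_on with
    | _ m ih =>
      by_cases hm : m ≤ K + 1
      · exact fixpre m hm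
      · push_neg at hm
        obtain ⟨t, rfl⟩ : ∃ t, m = k₁ + t := ⟨m - k₁, by omega⟩
        have h1 : act (a ++ B (k₁ + t)) = (a ++ B k₁) ++ sec (a ++ B k₂) (B t) := by
          rw [Badd, ← List.append_assoc, hcocycle, ih k₁ (by omega), hsec]
        have h2 : act (a ++ B (k₂ + t)) = (a ++ B k₂) ++ sec (a ++ B k₂) (B t) := by
          rw [Badd, ← List.append_assoc, hcocycle, ih k₂ (by omega)]
        have h3 : act (a ++ B (k₂ + t)) = a ++ B (k₂ + t) := ih (k₂ + t) (by omega)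
        have h4 : sec (a ++ B k₂) (B t) = B t := by
          have h5 := h2.symm.trans h3
          rw [Badd, ← List.append_assoc] at h5
          exact List.append_cancel_left h5
        rw [h1, h4, List.append_assoc, ← Badd]
  refine ⟨k₁, k₂, hk, hk1, hsec, ?_⟩
  intro n
  apply pfix _ ((a ++ B n).drop n)
  rw [List.take_append_drop]
  exact fixall n
end

section
/- Let G be an infinite group with finite monoid generating set X, with decidable (or just classically true) word problem. Given any finite list of words u₁,…,u_k ∈ X*, there exist nonempty words w₁,…,w_k ∈ X*, each representing the identity of G, such that the set W = {w₁u₁, w₂u₂, …, w_k u_k} is an antichain with respect to the prefix order on X*: no element of W is a proper prefix of another. -/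
/-!
Induction on `k`. Given nonempty relators `w₁, …, w_k` making the words `wᵢuᵢ` an antichain,
let `N` bound their lengths. Since `G` is infinite while only finitely many elements are
represented by words of length `≤ N`, there is a geodesic `g` of length `> N`; completing it by
a word `r` for its inverse gives the new relator `g r`. The word `g r u` is longer than every
`wᵢuᵢ`, so it is not a prefix of any of them. Conversely a prefix `wᵢuᵢ` of `g r u` would, being
shorter than `g`, be a prefix of `g`; then `g = wᵢ t` with `wᵢ` a nonempty relator, and the
shorter word `t` would represent the same element as `g`.
-/

section Words

variable {G X : Type*} [Monoid G] (ev : X → G)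

def IsGeodesic (l : List X) : Prop :=
  ∀ m : List X, (m.map ev).prod = (l.map ev).prod → l.length ≤ m.length

variable {ev}

theorem exists_map_prod_eq (hgen : Submonoid.closure (Set.range ev) = ⊤) (g : G) :
    ∃ l : List X, (l.map ev).prod = g := by
  have hg : g ∈ MonoidHom.mrange (FreeMonoid.lift ev) := by
    simp [FreeMonoid.mrange_lift, hgen]
  obtain ⟨l, rfl⟩ := hg
  exact ⟨l.toList, (FreeMonoid.lift_apply ev l).symm⟩

theorem exists_isGeodesic_map_prod_eq (hgen : Submonoid.closure (Set.range ev) = ⊤) (g : G) :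
    ∃ l : List X, IsGeodesic ev l ∧ (l.map ev).prod = g := by
  obtain ⟨l₀, hl₀⟩ := exists_map_prod_eq hgen g
  obtain ⟨l, hl, hmin⟩ := (InvImage.wf List.length wellFounded_lt).has_min
    {l : List X | (l.map ev).prod = g} ⟨l₀, hl₀⟩
  exact ⟨l, fun m hm => not_lt.mp (hmin m (hm.trans hl)), hl⟩

theorem exists_isGeodesic_length_gt [Infinite G] [Finite X]
    (hgen : Submonoid.closure (Set.range ev) = ⊤) (n : ℕ) :
    ∃ l : List X, IsGeodesic ev l ∧ n < l.length := by
  obtain ⟨g, hg⟩ :=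
    ((List.finite_length_le X n).image fun l => (l.map ev).prod).infinite_compl.nonempty
  obtain ⟨l, hgeo, rfl⟩ := exists_isGeodesic_map_prod_eq hgen g
  exact ⟨l, hgeo, not_le.mp fun hl => hg ⟨l, hl, rfl⟩⟩

theorem IsGeodesic.not_prefix {g w : List X} (hg : IsGeodesic ev g) (hw : w ≠ [])
    (hw_one : (w.map ev).prod = 1) : ¬ w <+: g := by
  rintro ⟨t, rfl⟩
  have := hg t (by simp [hw_one])
  simp only [List.length_append] at this
  exact hw (List.length_eq_zero_iff.mp (by omega))

end Words

section Antichain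

variable {X : Type*}

def IsPrefixAntichain {ι : Type*} (W : ι → List X) : Prop :=
  ∀ i j, ¬ ∃ z : List X, z ≠ [] ∧ W j = W i ++ z

theorem IsPrefixAntichain.snoc_append {k : ℕ} {W : Fin k → List X}
    (hW : IsPrefixAntichain W) {g : List X} (hlen : ∀ i, (W i).length ≤ g.length)
    (hpre : ∀ i, ¬ W i <+: g) (a : List X) :
    IsPrefixAntichain (Fin.snoc W (g ++ a) : Fin (k + 1) → List X) := by
  rintro i j ⟨z, hz, h⟩
  have hz_len : 0 < z.length := List.length_pos_iff.mpr hz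
  have h_len := congrArg List.length h
  simp only [List.length_append] at h_len
  induction i using Fin.lastCases <;> induction j using Fin.lastCases <;>
    simp only [Fin.snoc_last, Fin.snoc_castSucc, List.length_append] at h h_len
  case last.last => omega
  case last.cast j => have := hlen j; omega
  case cast.last i =>
    exact hpre i (List.prefix_of_prefix_length_le ⟨z, h.symm⟩ (List.prefix_append g a) (hlen i))
  case cast.cast i j => exact hW i j ⟨z, hz, h⟩

end Antichain

/-- Antichain lemma: in an infinite group `G` with finite monoid generating set `X`
(evaluation `ev : X → G`), for any words `u₁, …, u_k` over `X` there exist nonempty words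
`w₁, …, w_k` each representing the identity such that `{w₁u₁, …, w_k u_k}` is an antichain
in prefix order: no `wᵢuᵢ` is a proper prefix of any `wⱼuⱼ`. -/
theorem stmt3 {G : Type*} [Group G] [Infinite G] {X : Type*} [Fintype X] (ev : X → G)
    (hgen : Submonoid.closure (Set.range ev) = ⊤)
    (k : ℕ) (u : Fin k → List X) :
    ∃ w : Fin k → List X,
      (∀ i, w i ≠ [] ∧ ((w i).map ev).prod = 1) ∧
      ∀ i j : Fin k, ¬ ∃ z : List X, z ≠ [] ∧ w j ++ u j = (w i ++ u i) ++ z := by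
  induction k with
  | zero => exact ⟨Fin.elim0, fun i => i.elim0, fun i => i.elim0⟩
  | succ k ih =>
    obtain ⟨w, hw, hanti⟩ := ih (Fin.init u)
    set W : Fin k → List X := fun i => w i ++ Fin.init u i
    obtain ⟨g, hg, hg_len⟩ :=
      exists_isGeodesic_length_gt hgen (Finset.univ.sup fun i => (W i).length)
    obtain ⟨r, hr⟩ := exists_map_prod_eq hgen ((g.map ev).prod)⁻¹
    have hW_len (i : Fin k) : (W i).length ≤ g.length :=
      (Finset.le_sup (f := fun i => (W i).length) (Finset.mem_univ i)).trans hg_len.le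
    have hW_pre (i : Fin k) : ¬ W i <+: g := fun h =>
      hg.not_prefix (hw i).1 (hw i).2 ((List.prefix_append _ _).trans h)
    have hsnoc : (fun i => Fin.snoc (α := fun _ => List X) w (g ++ r) i ++ u i) =
        Fin.snoc W (g ++ (r ++ u (Fin.last k))) := by
      funext i
      induction i using Fin.lastCases <;> simp [W, Fin.init]
    refine ⟨Fin.snoc w (g ++ r), fun i => ?_, ?_⟩
    · induction i using Fin.lastCases
      · simp [hr, List.ne_nil_of_length_pos (Nat.zero_lt_of_lt hg_len)]
      · simpa using hw _
    · have := IsPrefixAntichain.snoc_append (W := W) hanti hW_len hW_pre (r ++ u (Fin.last k))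
      rwa [← hsnoc] at this
end

section
/- Let G be a finitely generated group with finite generating set X in which every element has finite order (G is torsion), and suppose G is infinite. Then the language of geodesic words over X contains no subset of the form {x yⁿ z : n ∈ ℕ} with y nonempty. Consequently, the geodesic language of an infinite torsion group is not of the pumpable form guaranteed for infinite regular languages. -/
/-- In an infinite finitely generated torsion group `G` (finite generating set `X`, every
element of finite order), the language of geodesic words over `X` contains no subset of the
form `{x yⁿ z : n ∈ ℕ}` with `y` nonempty; here a word `w` is geodesic when every word
representing the same element is at least as long. -/
theorem stmt9 {G : Type*} [Group G] [Infinite G] {X : Type*} [Fintype X] (ev : X → G)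
    (hgen : Submonoid.closure (Set.range ev) = ⊤)
    (htorsion : ∀ g : G, IsOfFinOrder g) :
    ¬ ∃ x y z : List X, y ≠ [] ∧ ∀ n : ℕ,
      ∀ w' : List X,
        ((w'.map ev).prod = (((x ++ (List.replicate n y).flatten ++ z).map ev).prod : G)) →
        (x ++ (List.replicate n y).flatten ++ z).length ≤ w'.length := by
  rintro ⟨x, y, z, hy, h⟩
  set g : G := (y.map ev).prod with hg
  set N := orderOf g with hN
  have hNpos : 0 < N := (htorsion g).orderOf_pos
  have hpow : (((List.replicate N y).flatten.map ev).prod : G) = 1 := by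
    have : ∀ n : ℕ, (((List.replicate n y).flatten.map ev).prod : G) = g ^ n := by
      intro n
      induction n with
      | zero => simp
      | succ k ih =>
        rw [List.replicate_succ, List.flatten_cons, List.map_append, List.prod_append, ih,
          ← hg, ← pow_succ']
    rw [this]; exact pow_orderOf_eq_one g
  have hle := h N (x ++ z) (by simp only [List.map_append, List.prod_append, hpow, mul_one])
  have hlen : 1 ≤ ((List.replicate N y).flatten).length := by
    rw [List.length_flatten]
    have : y.length ∈ (List.replicate N y).map List.length := by
      exact List.mem_map.mpr ⟨y, List.mem_replicate.mpr ⟨hNpos.ne', rfl⟩, rfl⟩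
    calc 1 ≤ y.length := List.length_pos_iff.mpr hy
    _ ≤ ((List.replicate N y).map List.length).sum := List.single_le_sum (by simp) _ this
  simp only [List.length_append] at hle
  omega
end

section
/- In the infinite dihedral group D∞ = ⟨a, b | a² = b² = 1⟩ acting on the binary rooted tree as the self-similar group with a = (1,1)·s and b = (a,b), the Schreier graph of the stabiliser of any ray η ≠ g·1^ω (any ray not in the orbit of 1^ω) is isomorphic as a labelled graph to the bi-infinite line with edges alternately labelled a and b; equivalently, for such η, the orbit map n ↦ η·(ab)ⁿ together with η·(ab)ⁿa enumerates the orbit of η bijectively. -/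
/-- Prepending a letter to an infinite binary word. -/
def consWord {α : Type*} (c : α) (ξ : ℕ → α) : ℕ → α :=
  fun n => match n with
  | 0 => c
  | n + 1 => ξ n

/-!
Since `a² = b² = 1`, every element of `⟨a, b⟩` is a rotation `(ab)ⁿ` or a reflection `a(ab)ⁿ`,
so the orbit of `η` is the range of the map and injectivity says that the stabiliser of `η`
in `⟨a, b⟩` is trivial.

Rotations act freely: `(ab)²` acts as `((ab)⁻¹, ab)` on the two subtrees, so if `(ab)^(2m)`
fixes a ray then `(ab)^(±m)` fixes its tail, while odd powers of `ab` change the first letter.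
Every reflection is conjugate by a rotation to `a` or to `b`; `a` fixes no ray and `b` fixes
only `1^ω`, so a reflection fixing `η` puts `η` in the orbit of `1^ω`.
-/

section Involutions

variable {G : Type*} [Group G] {a b : G}

def dihedralWord (a b : G) (p : ℤ × Bool) : G :=
  if p.2 then a * (a * b) ^ p.1 else (a * b) ^ p.1

@[simp]
theorem dihedralWord_mk_false (n : ℤ) : dihedralWord a b (n, false) = (a * b) ^ n := rfl

@[simp]
theorem dihedralWord_mk_true (n : ℤ) : dihedralWord a b (n, true) = a * (a * b) ^ n := rfl

variable (ha : a * a = 1) (hb : b * b = 1)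
include ha hb

theorem mul_eq_inv_of_mul_self_eq_one : b * a = (a * b)⁻¹ := by
  rw [mul_inv_rev, inv_eq_of_mul_eq_one_right ha, inv_eq_of_mul_eq_one_right hb]

theorem mul_zpow_neg_eq_zpow_mul (k : ℤ) : a * (a * b) ^ (-k) = (a * b) ^ k * a := by
  have h := (SemiconjBy.zpow_right (mul_assoc a b a).symm k).eq
  rwa [mul_eq_inv_of_mul_self_eq_one ha hb, inv_zpow'] at h

theorem mul_zpow_two_mul_eq_conj (k : ℤ) :
    a * (a * b) ^ (2 * k) = (a * b) ^ (-k) * a * (a * b) ^ k := by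
  rw [← mul_zpow_neg_eq_zpow_mul ha hb, neg_neg, mul_assoc, ← zpow_add, two_mul]

theorem mul_zpow_two_mul_add_one_eq_conj (k : ℤ) :
    a * (a * b) ^ (2 * k + 1) = (a * b) ^ (-k) * b * (a * b) ^ k := by
  calc a * (a * b) ^ (2 * k + 1) = a * (a * b) ^ k * (a * b) * (a * b) ^ k := by
        rw [mul_assoc a, mul_assoc a, ← zpow_add_one, ← zpow_add]; ring_nf
    _ = (a * b) ^ (-k) * a * (a * b) * (a * b) ^ k := by
        rw [← mul_zpow_neg_eq_zpow_mul ha hb, neg_neg]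
    _ = (a * b) ^ (-k) * b * (a * b) ^ k := by
        rw [mul_assoc _ a, ← mul_assoc a, ha, one_mul]

theorem closure_pair_eq_range_dihedralWord :
    (Subgroup.closure {a, b} : Set G) = Set.range (dihedralWord a b) := by
  refine subset_antisymm (fun g hg => ?_) ?_
  · have hmul : ∀ x ∈ ({a, b} : Set G), ∀ y ∈ Set.range (dihedralWord a b),
        x * y ∈ Set.range (dihedralWord a b) := by
      rintro x hx _ ⟨⟨n, _ | _⟩, rfl⟩ <;> rcases hx with hx | hx <;> subst x
      · exact ⟨(n, true), rfl⟩
      · exact ⟨(1 + n, true), show _ = b * (a * b) ^ n by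
          rw [dihedralWord_mk_true, zpow_one_add, ← mul_assoc, ← mul_assoc, ha, one_mul]⟩
      · exact ⟨(n, false), show _ = a * (a * (a * b) ^ n) by
          rw [dihedralWord_mk_false, ← mul_assoc, ha, one_mul]⟩
      · exact ⟨(n - 1, false), show _ = b * (a * (a * b) ^ n) by
          rw [dihedralWord_mk_false, ← mul_assoc, mul_eq_inv_of_mul_self_eq_one ha hb,
            zpow_sub_one, ← zpow_neg_one, ← zpow_add, ← zpow_add, add_comm]⟩
    have hinv : ∀ x ∈ ({a, b} : Set G), x⁻¹ = x := by
      rintro x (rfl | rfl)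
      exacts [inv_eq_of_mul_eq_one_right ha, inv_eq_of_mul_eq_one_right hb]
    induction hg using Subgroup.closure_induction_left with
    | one => exact ⟨(0, false), zpow_zero _⟩
    | mul_left x hx y _ ih => exact hmul x hx y ih
    | inv_mul_cancel x hx y _ ih => rw [hinv x hx]; exact hmul x hx y ih
  · rintro _ ⟨⟨n, _ | _⟩, rfl⟩
    · exact zpow_mem (mul_mem (Subgroup.subset_closure (by simp))
        (Subgroup.subset_closure (by simp))) n
    · exact mul_mem (Subgroup.subset_closure (by simp)) (zpow_mem (mul_mem
        (Subgroup.subset_closure (by simp)) (Subgroup.subset_closure (by simp))) n)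

end Involutions

theorem exists_eq_consWord {α : Type*} (ξ : ℕ → α) : ∃ c t, ξ = consWord c t :=
  ⟨ξ 0, fun n => ξ (n + 1), funext fun n => by cases n <;> rfl⟩

theorem consWord_inj {α : Type*} {c d : α} {s t : ℕ → α} :
    consWord c s = consWord d t ↔ c = d ∧ s = t :=
  ⟨fun h => ⟨congrFun h 0, funext fun n => congrFun h (n + 1)⟩,
    by rintro ⟨rfl, rfl⟩; rfl⟩

theorem Equiv.Perm.zpow_apply_of_semiconj {α β : Type*} {f : α → β} {g : Equiv.Perm β}
    {h : Equiv.Perm α} (hf : ∀ x, g (f x) = f (h x)) (n : ℤ) (x : α) :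
    (g ^ n) (f x) = f ((h ^ n) x) := by
  have hf_inv : ∀ x, g⁻¹ (f x) = f (h⁻¹ x) := fun x => by
    rw [Equiv.Perm.inv_eq_iff_eq, hf]; exact congrArg f (h.apply_symm_apply x).symm
  induction n using Int.induction_on generalizing x with
  | zero => rfl
  | succ n ih => rw [zpow_add_one, Equiv.Perm.mul_apply, hf, ih]; rfl
  | pred n ih =>
    rw [zpow_sub_one, Equiv.Perm.mul_apply, hf_inv, ih, ← Equiv.Perm.mul_apply, ← zpow_sub_one]

@[elab_as_elim]
theorem consWord_induction_of_ne_true {P : (ℕ → Bool) → Prop}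
    (false_cons : ∀ t, P (consWord false t)) (true_cons : ∀ t, P t → P (consWord true t))
    {ξ : ℕ → Bool} (hξ : ξ ≠ fun _ => true) : P ξ := by
  obtain ⟨n, hn⟩ := Function.ne_iff.1 hξ
  induction n generalizing ξ with
  | zero =>
    obtain ⟨c, t, rfl⟩ := exists_eq_consWord ξ
    obtain rfl : c = false := Bool.eq_false_iff.2 hn
    exact false_cons t
  | succ n ih =>
    obtain ⟨c, t, rfl⟩ := exists_eq_consWord ξ
    cases c
    · exact false_cons t
    · exact true_cons t (ih (Function.ne_iff.2 ⟨n, hn⟩) hn)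

namespace DihedralTree

variable {a b : Equiv.Perm (ℕ → Bool)}
  (ha : ∀ (c : Bool) (ξ : ℕ → Bool), a (consWord c ξ) = consWord (!c) ξ)
  (hb0 : ∀ ξ : ℕ → Bool, b (consWord false ξ) = consWord false (a ξ))
  (hb1 : ∀ ξ : ℕ → Bool, b (consWord true ξ) = consWord true (b ξ))

section

include ha

theorem a_apply_ne (ξ : ℕ → Bool) : a ξ ≠ ξ := by
  obtain ⟨c, t, rfl⟩ := exists_eq_consWord ξ
  rw [ha, Ne, consWord_inj]
  simp

theorem a_involutive : Function.Involutive a := by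
  intro ξ
  obtain ⟨c, t, rfl⟩ := exists_eq_consWord ξ
  rw [ha, ha, Bool.not_not]

theorem a_mul_self : a * a = 1 := Equiv.ext (a_involutive ha)

end

include hb1 in
theorem b_apply_const_true : b (fun _ => true) = fun _ => true := by
  have h : b (fun _ => true) = consWord true (b fun _ => true) := by
    rw [← hb1]; congr; funext n; cases n <;> rfl
  funext n
  induction n with
  | zero => exact congrFun h 0
  | succ n ih => rw [congrFun h (n + 1)]; exact ih

section

include ha hb0 hb1

theorem b_involutive : Function.Involutive b := by
  intro ξ
  by_cases hξ : ξ = fun _ => true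
  · rw [hξ, b_apply_const_true hb1, b_apply_const_true hb1]
  · refine consWord_induction_of_ne_true (fun t => ?_) (fun t ih => ?_) hξ
    · rw [hb0, hb0, a_involutive ha]
    · rw [hb1, hb1, ih]

theorem b_mul_self : b * b = 1 := Equiv.ext (b_involutive ha hb0 hb1)

theorem eq_const_true_of_b_apply_eq_self {ξ : ℕ → Bool} (h : b ξ = ξ) :
    ξ = fun _ => true := by
  by_contra hξ
  revert h
  refine consWord_induction_of_ne_true (fun t => ?_) (fun t ih => ?_) hξ
  · rw [hb0, consWord_inj]; exact fun h => a_apply_ne ha t h.2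
  · rw [hb1, consWord_inj]; exact fun h => ih h.2

end

include ha hb0 in
theorem mul_apply_consWord_false (t : ℕ → Bool) :
    (a * b) (consWord false t) = consWord true (a t) := by
  rw [Equiv.Perm.mul_apply, hb0, ha]; rfl

include ha hb1 in
theorem mul_apply_consWord_true (t : ℕ → Bool) :
    (a * b) (consWord true t) = consWord false (b t) := by
  rw [Equiv.Perm.mul_apply, hb1, ha]; rfl

section

include ha hb0 hb1

theorem mul_apply_zero (ξ : ℕ → Bool) : (a * b) ξ 0 = !(ξ 0) := by
  obtain ⟨c, t, rfl⟩ := exists_eq_consWord ξ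
  cases c
  · rw [mul_apply_consWord_false ha hb0]; rfl
  · rw [mul_apply_consWord_true ha hb1]; rfl

theorem mul_zpow_two_mul_apply_consWord_false (m : ℤ) (t : ℕ → Bool) :
    ((a * b) ^ (2 * m)) (consWord false t) = consWord false (((a * b) ^ (-m)) t) := by
  have hsq : ∀ t, ((a * b) ^ (2 : ℤ)) (consWord false t) = consWord false ((a * b)⁻¹ t) := by
    intro t
    rw [zpow_two, Equiv.Perm.mul_apply, mul_apply_consWord_false ha hb0,
      mul_apply_consWord_true ha hb1,
      ← mul_eq_inv_of_mul_self_eq_one (a_mul_self ha) (b_mul_self ha hb0 hb1)]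
    rfl
  rw [zpow_mul, zpow_neg, ← inv_zpow]
  exact Equiv.Perm.zpow_apply_of_semiconj hsq m t

theorem mul_zpow_two_mul_apply_consWord_true (m : ℤ) (t : ℕ → Bool) :
    ((a * b) ^ (2 * m)) (consWord true t) = consWord true (((a * b) ^ m) t) := by
  have hsq : ∀ t, ((a * b) ^ (2 : ℤ)) (consWord true t) = consWord true ((a * b) t) := by
    intro t
    rw [zpow_two, Equiv.Perm.mul_apply, mul_apply_consWord_true ha hb1,
      mul_apply_consWord_false ha hb0]
    rfl
  rw [zpow_mul]
  exact Equiv.Perm.zpow_apply_of_semiconj hsq m t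

theorem mul_zpow_two_mul_apply_zero (m : ℤ) (ξ : ℕ → Bool) :
    ((a * b) ^ (2 * m)) ξ 0 = ξ 0 := by
  obtain ⟨c, t, rfl⟩ := exists_eq_consWord ξ
  cases c
  · rw [mul_zpow_two_mul_apply_consWord_false ha hb0 hb1]; rfl
  · rw [mul_zpow_two_mul_apply_consWord_true ha hb0 hb1]; rfl

theorem mul_zpow_apply_ne {k : ℤ} (hk : k ≠ 0) (ξ : ℕ → Bool) : ((a * b) ^ k) ξ ≠ ξ := by
  induction hn : k.natAbs using Nat.strong_induction_on generalizing k ξ with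
  | _ n ih =>
    obtain ⟨m, rfl | rfl⟩ := Int.even_or_odd' k
    · obtain ⟨c, t, rfl⟩ := exists_eq_consWord ξ
      have hm : m ≠ 0 := by omega
      cases c
      · rw [mul_zpow_two_mul_apply_consWord_false ha hb0 hb1, Ne, consWord_inj, not_and]
        exact fun _ => ih _ (by omega) (neg_ne_zero.2 hm) t rfl
      · rw [mul_zpow_two_mul_apply_consWord_true ha hb0 hb1, Ne, consWord_inj, not_and]
        exact fun _ => ih _ (by omega) hm t rfl
    · intro h
      have h0 := congrFun h 0
      rw [zpow_add_one, Equiv.Perm.mul_apply, mul_zpow_two_mul_apply_zero ha hb0 hb1,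
        mul_apply_zero ha hb0 hb1] at h0
      exact Bool.not_ne_self _ h0

theorem mul_zpow_apply_injective (ξ : ℕ → Bool) :
    Function.Injective fun k : ℤ => ((a * b) ^ k) ξ := by
  intro n m h
  by_contra hne
  apply mul_zpow_apply_ne ha hb0 hb1 (sub_ne_zero.2 hne) (((a * b) ^ m) ξ)
  rw [← Equiv.Perm.mul_apply, ← zpow_add, sub_add_cancel]
  exact h

theorem exists_zpow_apply_const_true_of_mul_zpow_apply_eq_self {n : ℤ} {ξ : ℕ → Bool}
    (h : (a * (a * b) ^ n) ξ = ξ) : ∃ k : ℤ, ((a * b) ^ k) (fun _ => true) = ξ := by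
  have fixed_of_conj : ∀ x (k : ℤ), ((a * b) ^ (-k) * x * (a * b) ^ k) ξ = ξ →
      x (((a * b) ^ k) ξ) = ((a * b) ^ k) ξ := fun x k h => by
    rw [zpow_neg, Equiv.Perm.mul_apply, Equiv.Perm.mul_apply] at h
    exact Equiv.Perm.inv_eq_iff_eq.1 h
  obtain ⟨k, rfl | rfl⟩ := Int.even_or_odd' n
  · rw [mul_zpow_two_mul_eq_conj (a_mul_self ha) (b_mul_self ha hb0 hb1)] at h
    exact (a_apply_ne ha _ (fixed_of_conj a k h)).elim
  · rw [mul_zpow_two_mul_add_one_eq_conj (a_mul_self ha) (b_mul_self ha hb0 hb1)] at h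
    refine ⟨-k, ?_⟩
    rw [← eq_const_true_of_b_apply_eq_self ha hb0 hb1 (fixed_of_conj b k h),
      ← Equiv.Perm.mul_apply, ← zpow_add, neg_add_cancel, zpow_zero, Equiv.Perm.one_apply]

variable {η : ℕ → Bool} (hη : ∀ k : ℤ, ((a * b) ^ k) (fun _ => true) ≠ η)
include hη

theorem zpow_apply_ne_mul_zpow_apply (n m : ℤ) : ((a * b) ^ n) η ≠ (a * (a * b) ^ m) η := by
  intro h
  have hfix : (a * (a * b) ^ (n + m)) η = η := by
    have : a * (a * b) ^ (n + m) = (a * b) ^ (-n) * (a * (a * b) ^ m) := by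
      rw [← mul_assoc, ← mul_zpow_neg_eq_zpow_mul (a_mul_self ha) (b_mul_self ha hb0 hb1),
        neg_neg, mul_assoc, ← zpow_add]
    rw [this, Equiv.Perm.mul_apply, ← h, ← Equiv.Perm.mul_apply, ← zpow_add, neg_add_cancel,
      zpow_zero, Equiv.Perm.one_apply]
  obtain ⟨k, hk⟩ := exists_zpow_apply_const_true_of_mul_zpow_apply_eq_self ha hb0 hb1 hfix
  exact hη k hk

theorem dihedralWord_apply_injective : Function.Injective fun p => dihedralWord a b p η := by
  rintro ⟨n, _ | _⟩ ⟨m, _ | _⟩ h <;>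
    simp only [dihedralWord_mk_false, dihedralWord_mk_true] at h
  · rw [mul_zpow_apply_injective ha hb0 hb1 η h]
  · exact absurd h (zpow_apply_ne_mul_zpow_apply ha hb0 hb1 hη n m)
  · exact absurd h.symm (zpow_apply_ne_mul_zpow_apply ha hb0 hb1 hη m n)
  · rw [Equiv.Perm.mul_apply, Equiv.Perm.mul_apply] at h
    rw [mul_zpow_apply_injective ha hb0 hb1 η (a.injective h)]

end

end DihedralTree

open DihedralTree in
/-- In the infinite dihedral group acting self-similarly on the binary tree
(`a` swaps the first letter, `b` is given by `(0ξ)·b = 0(ξ·a)`, `(1ξ)·b = 1(ξ·b)`),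
for any ray `η` not in the orbit of `1^ω` the Schreier graph of `Stab(η)` is a bi-infinite
line: the map `(n, s) ↦ (a^[s] (ab)^n) η` (for `n ∈ ℤ`, `s ∈ Bool`) is injective with
range exactly the orbit of `η` under `⟨a, b⟩`. -/
theorem stmt14 (a b : Equiv.Perm (ℕ → Bool))
    (ha : ∀ (c : Bool) (ξ : ℕ → Bool), a (consWord c ξ) = consWord (!c) ξ)
    (hb0 : ∀ ξ : ℕ → Bool, b (consWord false ξ) = consWord false (a ξ))
    (hb1 : ∀ ξ : ℕ → Bool, b (consWord true ξ) = consWord true (b ξ))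
    (η : ℕ → Bool)
    (hη : ¬ ∃ g ∈ Subgroup.closure ({a, b} : Set (Equiv.Perm (ℕ → Bool))),
      g (fun _ => true) = η) :
    Function.Injective (fun p : ℤ × Bool =>
      ((if p.2 then a * (a * b) ^ p.1 else (a * b) ^ p.1) : Equiv.Perm (ℕ → Bool)) η) ∧
    Set.range (fun p : ℤ × Bool =>
      ((if p.2 then a * (a * b) ^ p.1 else (a * b) ^ p.1) : Equiv.Perm (ℕ → Bool)) η) =
      {ξ | ∃ g ∈ Subgroup.closure ({a, b} : Set (Equiv.Perm (ℕ → Bool))), g η = ξ} := by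
  have hclosure := closure_pair_eq_range_dihedralWord (a_mul_self ha) (b_mul_self ha hb0 hb1)
  have hη' : ∀ k : ℤ, ((a * b) ^ k) (fun _ => true) ≠ η := fun k hk =>
    hη ⟨(a * b) ^ k, by rw [← SetLike.mem_coe, hclosure]; exact ⟨(k, false), rfl⟩, hk⟩
  refine ⟨dihedralWord_apply_injective ha hb0 hb1 hη', ?_⟩
  change Set.range ((fun g : Equiv.Perm (ℕ → Bool) => g η) ∘ dihedralWord a b) =
    (fun g => g η) '' (Subgroup.closure {a, b} : Set (Equiv.Perm (ℕ → Bool)))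
  rw [hclosure, Set.range_comp]
end
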